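/- The map (D,L) ↦ 𝔇_{(D,L)} from the semidirect product ℋ = Der(𝔤) ⋉ 𝒟 to derivations of the full graph C(𝔤) is a Lie algebra homomorphism: [𝔇_{(D₁,L₁)}, 𝔇_{(D₂,L₂)}] = 𝔇_{[(D₁,L₁),(D₂,L₂)]}. -/

import Mathlib

variable {k : Type*} [Field k] {g : Type*} [LieRing g] [LieAlgebra k g]

/-- A `d`-derivation of `g`: a linear map `L : Der(g) → g` with
`L ⁅D₁, D₂⁆ = D₁ (L D₂) - D₂ (L D₁)`. -/
def IsDDerivation (L : LieDerivation k g g →ₗ[k] g) : Prop :=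
  ∀ D₁ D₂ : LieDerivation k g g, L ⁅D₁, D₂⁆ = D₁ (L D₂) - D₂ (L D₁)

/-- The inner `d`-derivation `L_x : D ↦ -D x`. -/
def innerDDer (x : g) : LieDerivation k g g →ₗ[k] g where
  toFun D := -(D x)
  map_add' := by intros; simp [add_comm]
  map_smul' := by intros; simp

/-- The bracket of `d`-derivations: `[L₁,L₂](D) = L₁(ad(L₂ D)) - L₂(ad(L₁ D))`. -/
def dBracket (L₁ L₂ : LieDerivation k g g →ₗ[k] g) : LieDerivation k g g →ₗ[k] g :=
  L₁ ∘ₗ ((LieDerivation.ad k g : g →ₗ⁅k⁆ LieDerivation k g g) : g →ₗ[k] LieDerivation k g g) ∘ₗ L₂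
    - L₂ ∘ₗ ((LieDerivation.ad k g : g →ₗ⁅k⁆ LieDerivation k g g) : g →ₗ[k] LieDerivation k g g) ∘ₗ L₁

/-- The action of `Der(g)` on `d`-derivations: `D(L) = D ∘ L - L ∘ ad(D)`. -/
def derAct (D : LieDerivation k g g) (L : LieDerivation k g g →ₗ[k] g) :
    LieDerivation k g g →ₗ[k] g :=
  (D : g →ₗ[k] g) ∘ₗ L - L ∘ₗ ((LieAlgebra.ad k (LieDerivation k g g)) D)

/-- The bracket of the full graph `C(g) = Der(g) ⋉ g`. -/
def fgBracket (p q : LieDerivation k g g × g) : LieDerivation k g g × g :=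
  (⁅p.1, q.1⁆, p.1 q.2 - q.1 p.2 + ⁅p.2, q.2⁆)

/-- A derivation of the full graph: a linear endomorphism satisfying Leibniz. -/
def IsFGDerivation (T : (LieDerivation k g g × g) →ₗ[k] (LieDerivation k g g × g)) : Prop :=
  ∀ p q, T (fgBracket p q) = fgBracket (T p) q + fgBracket p (T q)

/-- The derivation `𝔇_{(D,L)}` of the full graph. -/
def fgDer (D : LieDerivation k g g) (L : LieDerivation k g g →ₗ[k] g)
    (p : LieDerivation k g g × g) : LieDerivation k g g × g :=
  (⁅D, p.1⁆, D p.2 + L (LieDerivation.ad k g p.2) + L p.1)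

/-!
Both sides only see `p = (E, x)` through `x` and the derivation `E + ad x`, and
`p ↦ E + ad x` intertwines `𝔇_{(D,L)}` with `ad D + ad ∘ L`, because `ad (D x) = ⁅D, ad x⁆`.
After this substitution the second components of the two sides agree term by term, and the
first components agree by the Jacobi identity in `Der(g)`.
-/

def fgProj (p : LieDerivation k g g × g) : LieDerivation k g g :=
  p.1 + LieDerivation.ad k g p.2

theorem dBracket_apply (L₁ L₂ : LieDerivation k g g →ₗ[k] g) (E : LieDerivation k g g) :
    dBracket L₁ L₂ E = L₁ (LieDerivation.ad k g (L₂ E)) - L₂ (LieDerivation.ad k g (L₁ E)) :=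
  rfl

theorem derAct_apply (D : LieDerivation k g g) (L : LieDerivation k g g →ₗ[k] g)
    (E : LieDerivation k g g) : derAct D L E = D (L E) - L ⁅D, E⁆ :=
  rfl

theorem fgDer_fst (D : LieDerivation k g g) (L : LieDerivation k g g →ₗ[k] g)
    (p : LieDerivation k g g × g) : (fgDer D L p).1 = ⁅D, p.1⁆ :=
  rfl

theorem fgDer_snd (D : LieDerivation k g g) (L : LieDerivation k g g →ₗ[k] g)
    (p : LieDerivation k g g × g) : (fgDer D L p).2 = D p.2 + L (fgProj p) := by
  rw [fgDer, fgProj, map_add, add_assoc, add_comm (L p.1)]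

theorem fgProj_fgDer (D : LieDerivation k g g) (L : LieDerivation k g g →ₗ[k] g)
    (p : LieDerivation k g g × g) :
    fgProj (fgDer D L p) = ⁅D, fgProj p⁆ + LieDerivation.ad k g (L (fgProj p)) := by
  rw [fgProj, fgDer_fst, fgDer_snd, map_add, ← LieDerivation.lie_der_ad_eq_ad_der, fgProj,
    lie_add]
  abel

theorem stmt11_general (D₁ D₂ : LieDerivation k g g) (L₁ L₂ : LieDerivation k g g →ₗ[k] g) :
    ∀ p : LieDerivation k g g × g,
      fgDer D₁ L₁ (fgDer D₂ L₂ p) - fgDer D₂ L₂ (fgDer D₁ L₁ p) =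
        fgDer ⁅D₁, D₂⁆ (dBracket L₁ L₂ + derAct D₁ L₂ - derAct D₂ L₁) p := by
  intro p
  ext1
  · simp only [Prod.fst_sub, fgDer_fst, lie_lie]
  · simp only [Prod.snd_sub, fgDer_snd, fgProj_fgDer, map_add, LieDerivation.commutator_apply,
      LinearMap.sub_apply, LinearMap.add_apply, dBracket_apply, derAct_apply]
    abel

theorem stmt11 (D₁ D₂ : LieDerivation k g g) (L₁ L₂ : LieDerivation k g g →ₗ[k] g)
    (h₁ : IsDDerivation L₁) (h₂ : IsDDerivation L₂) :
    ∀ p : LieDerivation k g g × g,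
      fgDer D₁ L₁ (fgDer D₂ L₂ p) - fgDer D₂ L₂ (fgDer D₁ L₁ p) =
        fgDer ⁅D₁, D₂⁆ (dBracket L₁ L₂ + derAct D₁ L₂ - derAct D₂ L₁) p :=
  stmt11_general D₁ D₂ L₁ L₂
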